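/- arXiv:1711.01995 — 3 statements merged into one kernel-verified Lean document; each statement's English description precedes it below -/
import Mathlib

section
/- Consider functors X : C → C', Y : D → D', G : D → C, G' : D' → C' together with a natural transformation τ : X ∘ G ⇒ G' ∘ Y, and adjunctions (F ⊣ G, η, ε), (F' ⊣ G', η', ε'), (X ⊣ S, θ, ζ), (Y ⊣ T, θ', ζ'). Let σ : F' ∘ X ⇒ Y ∘ F be the horizontal mate of τ with respect to F ⊣ G and F' ⊣ G', and let ρ : G ∘ T ⇒ S ∘ G' be the vertical mate of τ with respect to X ⊣ S and Y ⊣ T. Then σ and ρ are conjugate with respect to the composite adjunctions Y∘F ⊣ G∘T and F'∘X ⊣ S∘G' (i.e. they correspond under the mating bijection for these adjunctions with identity functors on the outside). In particular, σ is an isomorphism if and only if ρ is an isomorphism. -/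
open CategoryTheory

/-- **Beck–Chevalley interchange.** Given a square of adjunctions
`(F ⊣ G)`, `(F' ⊣ G')` (horizontal) and `(X ⊣ S)`, `(Y ⊣ T)` (vertical), a transformation
`τ : X∘G ⟹ G'∘Y`, its horizontal mate `σ : F'∘X ⟹ Y∘F` and its vertical mate
`ρ : G∘T ⟹ S∘G'`, the transformations `σ` and `ρ` are conjugate with respect to the composite
adjunctions `Y∘F ⊣ G∘T` and `F'∘X ⊣ S∘G'`.  In particular `σ` is an isomorphism iff `ρ` is. -/
theorem beck_chevalley_interchange
    {C C' D D' : Type*} [Category C] [Category C'] [Category D] [Category D']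
    (X : C ⥤ C') (Y : D ⥤ D') (G : D ⥤ C) (G' : D' ⥤ C')
    (F : C ⥤ D) (F' : C' ⥤ D') (S : C' ⥤ C) (T : D' ⥤ D)
    (adjF : F ⊣ G) (adjF' : F' ⊣ G') (adjX : X ⊣ S) (adjY : Y ⊣ T)
    (τ : G ⋙ X ⟶ Y ⋙ G')
    -- the horizontal mate of τ (w.r.t. F ⊣ G, F' ⊣ G')
    (σ : X ⋙ F' ⟶ F ⋙ Y)
    (hσ : ∀ c : C, σ.app c =
      F'.map (X.map (adjF.unit.app c)) ≫ F'.map (τ.app (F.obj c)) ≫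
        adjF'.counit.app (Y.obj (F.obj c)))
    -- the vertical mate of τ (w.r.t. X ⊣ S, Y ⊣ T)
    (ρ : T ⋙ G ⟶ G' ⋙ S)
    (hρ : ∀ d' : D', ρ.app d' =
      adjX.unit.app (G.obj (T.obj d')) ≫ S.map (τ.app (T.obj d')) ≫
        S.map (G'.map (adjY.counit.app d'))) :
    -- σ and ρ are conjugate w.r.t. the composite adjunctions Y∘F ⊣ G∘T and F'∘X ⊣ S∘G'
    (∀ d' : D', ρ.app d' =
      (adjX.comp adjF').unit.app (G.obj (T.obj d')) ≫
        S.map (G'.map (σ.app (G.obj (T.obj d')))) ≫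
        S.map (G'.map ((adjF.comp adjY).counit.app d')))
    ∧ (IsIso σ ↔ IsIso ρ) := by
  have key : ∀ d' : D', ρ.app d' =
      (adjX.comp adjF').unit.app (G.obj (T.obj d')) ≫
        S.map (G'.map (σ.app (G.obj (T.obj d')))) ≫
        S.map (G'.map ((adjF.comp adjY).counit.app d')) := by
    intro d'
    rw [hρ, hσ]
    simp only [Adjunction.comp_unit_app, Adjunction.comp_counit_app, Functor.comp_obj,
      Functor.map_comp, Category.assoc]
    congr 1
    simp only [← S.map_comp]
    congr 1
    rw [adjF'.unit_naturality_assoc, adjF'.unit_naturality_assoc,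
      adjF'.right_triangle_components_assoc]
    have hnat := τ.naturality (adjF.counit.app (T.obj d'))
    dsimp at hnat
    rw [← reassoc_of% hnat]
    simp [← X.map_comp_assoc]
  refine ⟨key, ?_⟩
  have hconj : ρ = conjugateEquiv (adjF.comp adjY) (adjX.comp adjF') σ := by
    ext d'
    rw [key d']
    simp [conjugateEquiv, mateEquiv, Adjunction.comp]
  constructor
  · intro h
    rw [hconj]
    exact conjugateEquiv_iso _ _ σ
  · intro h
    have : IsIso (conjugateEquiv (adjF.comp adjY) (adjX.comp adjF') σ) := by
      rw [← hconj]; exact h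
    exact conjugateEquiv_of_iso (adjF.comp adjY) (adjX.comp adjF') σ
end

section
/- Consider functors G : D → C, G' : D' → C', X : C → C', Y : D → D' with left adjoints F ⊣ G and F' ⊣ G', and a natural isomorphism τ : X ∘ G ≅ G' ∘ Y. If Y has a fully faithful right adjoint, and X is fully faithful and has a right adjoint, then the mate σ : F' ∘ X ⇒ Y ∘ F of τ is a natural isomorphism, i.e. the square satisfies the Beck–Chevalley condition. -/
open CategoryTheory

/-- Given adjunctions `F ⊣ G`, `F' ⊣ G'`, functors `X, Y` and a natural
isomorphism `τ : X∘G ≅ G'∘Y`, if `Y` has a fully faithful right adjoint `T` and `X` is fully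
faithful with a right adjoint `S`, then the mate `σ = ε'_{YF} ∘ F'τ_F ∘ F'Xη : F'∘X ⟹ Y∘F`
of `τ` is a natural isomorphism (Beck–Chevalley condition). -/
theorem beck_chevalley_from_fully_faithful_adjoints
    {C C' D D' : Type*} [Category C] [Category C'] [Category D] [Category D']
    (G : D ⥤ C) (G' : D' ⥤ C') (X : C ⥤ C') (Y : D ⥤ D')
    (F : C ⥤ D) (F' : C' ⥤ D')
    (adjF : F ⊣ G) (adjF' : F' ⊣ G')
    (τ : G ⋙ X ⟶ Y ⋙ G') [IsIso τ]
    (T : D' ⥤ D) (adjY : Y ⊣ T) [T.Full] [T.Faithful]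
    (S : C' ⥤ C) (adjX : X ⊣ S) [X.Full] [X.Faithful]
    (σ : X ⋙ F' ⟶ F ⋙ Y)
    (hσ : ∀ c : C, σ.app c =
      F'.map (X.map (adjF.unit.app c)) ≫ F'.map (τ.app (F.obj c)) ≫
        adjF'.counit.app (Y.obj (F.obj c))) :
    IsIso σ := by
  -- σ is the inverse mate of τ
  have h1 : mateEquiv adjF adjF' σ = τ := by
    have : σ = (mateEquiv adjF adjF').symm τ := by
      ext c
      simp [mateEquiv, hσ c]
    rw [this]; exact (mateEquiv adjF adjF').apply_symm_apply τ
  -- the mate of τ along adjY, adjX is an iso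
  have h2 : IsIso (mateEquiv adjY adjX τ) := by
    dsimp [mateEquiv]
    infer_instance
  -- iterated mates: the conjugate of σ equals the mate of τ
  have h3 := iterated_mateEquiv_conjugateEquiv adjF adjF' adjX adjY σ
  rw [h1] at h3
  have h4 : IsIso (conjugateEquiv (adjF.comp adjY) (adjX.comp adjF') σ) := by
    rw [← h3]; exact h2
  exact conjugateEquiv_of_iso (adjF.comp adjY) (adjX.comp adjF') σ
end

section
/- Consider functors G : D → C, G' : D' → C', X : C → C', Y : D → D' with a natural isomorphism τ : X ∘ G ≅ G' ∘ Y, and suppose all four functors have left adjoints: (F ⊣ G, η, ε), (F' ⊣ G', η', ε'), (M ⊣ X, θ, ζ), (N ⊣ Y, θ', ζ'). Then: (1) if X and N are fully faithful, the mate σ : F' ∘ X ⇒ Y ∘ F of τ is a natural isomorphism (the square satisfies the Beck–Chevalley condition); (2) if both M and N are fully faithful, or both X and Y are fully faithful, then σ is a natural isomorphism if and only if there exists some natural isomorphism F' ∘ X ≅ Y ∘ F. -/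
open CategoryTheory

/-- Given adjunctions `F ⊣ G`, `F' ⊣ G'`, functors `X, Y` with left adjoints
`M ⊣ X` and `N ⊣ Y`, and a natural isomorphism `τ : X∘G ≅ G'∘Y` with mate
`σ = ε'_{YF} ∘ F'τ_F ∘ F'Xη : F'∘X ⟹ Y∘F`:
(1) if `X` and `N` are fully faithful then `σ` is an isomorphism;
(2) if both `M` and `N`, or both `X` and `Y`, are fully faithful, then `σ` is an isomorphism
iff there exists some natural isomorphism `F'∘X ≅ Y∘F`. -/
theorem beck_chevalley_from_fully_faithful_left_adjoints
    {C C' D D' : Type*} [Category C] [Category C'] [Category D] [Category D']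
    (G : D ⥤ C) (G' : D' ⥤ C') (X : C ⥤ C') (Y : D ⥤ D')
    (F : C ⥤ D) (F' : C' ⥤ D')
    (adjF : F ⊣ G) (adjF' : F' ⊣ G')
    (τ : G ⋙ X ⟶ Y ⋙ G') [IsIso τ]
    (M : C' ⥤ C) (adjX : M ⊣ X) (N : D' ⥤ D) (adjY : N ⊣ Y)
    (σ : X ⋙ F' ⟶ F ⋙ Y)
    (hσ : ∀ c : C, σ.app c =
      F'.map (X.map (adjF.unit.app c)) ≫ F'.map (τ.app (F.obj c)) ≫
        adjF'.counit.app (Y.obj (F.obj c))) :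
    ((X.Full ∧ X.Faithful ∧ N.Full ∧ N.Faithful) → IsIso σ)
    ∧ (((M.Full ∧ M.Faithful ∧ N.Full ∧ N.Faithful) ∨
        (X.Full ∧ X.Faithful ∧ Y.Full ∧ Y.Faithful)) →
      (IsIso σ ↔ Nonempty (X ⋙ F' ≅ F ⋙ Y))) := by
  haveI hβiso : IsIso ((conjugateEquiv (adjX.comp adjF) (adjF'.comp adjY)).symm τ) := by
    have : IsIso (((conjugateIsoEquiv (adjX.comp adjF) (adjF'.comp adjY)).symm
        (asIso τ)).hom) := inferInstance
    exact this
  have hβapp : ∀ c' : C',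
      ((conjugateEquiv (adjX.comp adjF) (adjF'.comp adjY)).symm τ).app c' =
      N.map (F'.map (adjX.unit.app c' ≫ X.map (adjF.unit.app (M.obj c')))) ≫
      N.map (F'.map (τ.app (F.obj (M.obj c')))) ≫
      N.map (adjF'.counit.app (Y.obj (F.obj (M.obj c')))) ≫
      adjY.counit.app (F.obj (M.obj c')) := by
    intro c'
    simp [conjugateEquiv, mateEquiv, Adjunction.comp]
  have nat1 : ∀ {A B : D'} (f : A ⟶ B) {Z : D'} (g : Y.obj (N.obj B) ⟶ Z),
      adjY.unit.app A ≫ Y.map (N.map f) ≫ g = f ≫ adjY.unit.app B ≫ g := by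
    intro A B f Z g
    rw [← Category.assoc, ← Category.assoc]
    congr 1
    simpa using (adjY.unit.naturality f).symm
  have tri1 : ∀ (d : D) {Z : D'} (g : Y.obj d ⟶ Z),
      adjY.unit.app (Y.obj d) ≫ Y.map (adjY.counit.app d) ≫ g = g := by
    intro d Z g
    rw [← Category.assoc, adjY.right_triangle_components]
    simp
  have key : ∀ c : C, σ.app c =
      adjY.unit.app (F'.obj (X.obj c)) ≫
      Y.map (((conjugateEquiv (adjX.comp adjF) (adjF'.comp adjY)).symm τ).app (X.obj c)) ≫
      Y.map (F.map (adjX.counit.app c)) := by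
    intro c
    rw [hβapp, hσ]
    simp only [Functor.map_comp, Category.assoc]
    rw [nat1, nat1, nat1, nat1]
    simp only [Functor.id_obj]
    rw [tri1]
    rw [show adjF'.counit.app (Y.obj (F.obj (M.obj (X.obj c)))) ≫
          Y.map (F.map (adjX.counit.app c)) =
        F'.map (G'.map (Y.map (F.map (adjX.counit.app c)))) ≫
          adjF'.counit.app (Y.obj (F.obj c)) from by
      simpa using (adjF'.counit.naturality (Y.map (F.map (adjX.counit.app c)))).symm]
    rw [show ∀ {Z : D'} (g : F'.obj (G'.obj (Y.obj (F.obj c))) ⟶ Z),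
        F'.map (τ.app (F.obj (M.obj (X.obj c)))) ≫
          F'.map (G'.map (Y.map (F.map (adjX.counit.app c)))) ≫ g =
        F'.map (X.map (G.map (F.map (adjX.counit.app c)))) ≫ F'.map (τ.app (F.obj c)) ≫ g from by
      intro Z g
      rw [← Category.assoc, ← Category.assoc, ← F'.map_comp, ← F'.map_comp]
      congr 2
      simpa using (τ.naturality (F.map (adjX.counit.app c))).symm]
    rw [show ∀ {Z : D'} (g : F'.obj (X.obj (G.obj (F.obj c))) ⟶ Z),
        F'.map (X.map (adjF.unit.app (M.obj (X.obj c)))) ≫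
          F'.map (X.map (G.map (F.map (adjX.counit.app c)))) ≫ g =
        F'.map (X.map (adjX.counit.app c)) ≫ F'.map (X.map (adjF.unit.app c)) ≫ g from by
      intro Z g
      rw [← Category.assoc, ← Category.assoc, ← F'.map_comp, ← F'.map_comp, ← X.map_comp,
        ← X.map_comp]
      congr 3
      simpa using (adjF.unit.naturality (adjX.counit.app c)).symm]
    rw [show ∀ {Z : D'} (g : F'.obj (X.obj c) ⟶ Z),
        F'.map (adjX.unit.app (X.obj c)) ≫ F'.map (X.map (adjX.counit.app c)) ≫ g = g from by
      intro Z g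
      rw [← Category.assoc, ← F'.map_comp, adjX.right_triangle_components]
      simp]
  constructor
  · rintro ⟨hXfull, hXfaith, hNfull, hNfaith⟩
    haveI := hXfull; haveI := hXfaith; haveI := hNfull; haveI := hNfaith
    haveI : ∀ c : C, IsIso (σ.app c) := by
      intro c
      rw [key c]
      infer_instance
    exact NatIso.isIso_of_isIso_app σ
  · rintro hcase
    constructor
    · intro hσiso
      exact ⟨asIso σ⟩
    · rintro ⟨φ⟩
      haveI : ∀ c : C, IsIso (σ.app c) := by
        intro c
        rw [key c]
        rcases hcase with ⟨hMfull, hMfaith, hNfull, hNfaith⟩ | ⟨hXfull, hXfaith, hYfull, hYfaith⟩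
        · haveI := hMfull; haveI := hMfaith; haveI := hNfull; haveI := hNfaith
          haveI h1 : IsIso (adjX.unit.app (X.obj c) ≫ X.map (adjX.counit.app c)) := by
            have : adjX.unit.app (X.obj c) ≫ X.map (adjX.counit.app c) = 𝟙 (X.obj c) :=
              adjX.right_triangle_components c
            rw [this]
            exact inferInstanceAs (IsIso (𝟙 (X.obj c)))
          haveI h2 : IsIso (X.map (adjX.counit.app c)) :=
            IsIso.of_isIso_comp_left (adjX.unit.app (X.obj c)) (X.map (adjX.counit.app c))
          have h3 : Y.map (F.map (adjX.counit.app c)) =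
              inv (φ.hom.app (M.obj (X.obj c))) ≫ F'.map (X.map (adjX.counit.app c)) ≫
                φ.hom.app c := by
            rw [IsIso.eq_inv_comp]
            simpa using (φ.hom.naturality (adjX.counit.app c)).symm
          haveI h4 : IsIso (Y.map (F.map (adjX.counit.app c))) := by
            rw [h3]; infer_instance
          infer_instance
        · haveI := hXfull; haveI := hXfaith; haveI := hYfull; haveI := hYfaith
          haveI h1 : ∀ d : D, IsIso (adjY.unit.app (Y.obj d)) := by
            intro d
            haveI : IsIso (adjY.unit.app (Y.obj d) ≫ Y.map (adjY.counit.app d)) := by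
              have : adjY.unit.app (Y.obj d) ≫ Y.map (adjY.counit.app d) = 𝟙 (Y.obj d) :=
                adjY.right_triangle_components d
              rw [this]
              exact inferInstanceAs (IsIso (𝟙 (Y.obj d)))
            exact IsIso.of_isIso_comp_right (adjY.unit.app (Y.obj d))
              (Y.map (adjY.counit.app d))
          have h2 : adjY.unit.app (F'.obj (X.obj c)) ≫ Y.map (N.map (φ.hom.app c)) =
              φ.hom.app c ≫ adjY.unit.app (Y.obj (F.obj c)) := by
            simpa using (adjY.unit.naturality (φ.hom.app c)).symm
          haveI h3 : IsIso (adjY.unit.app (F'.obj (X.obj c))) := by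
            have h4 : adjY.unit.app (F'.obj (X.obj c)) =
                φ.hom.app c ≫ adjY.unit.app (Y.obj (F.obj c)) ≫
                  inv (Y.map (N.map (φ.hom.app c))) := by
              rw [← Category.assoc, ← h2, Category.assoc, IsIso.hom_inv_id, Category.comp_id]
            rw [h4]
            infer_instance
          infer_instance
      exact NatIso.isIso_of_isIso_app σ
end
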